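/- (Validity of the multilayered bounds for switchers.) Under the multilayered sample selection model with Assumption RCT, let R be a collection of constraints on response-type probability vectors, suppose the true vector (P(T=(d,d')))_{(d,d')} belongs to Θ_I(R), and suppose every Y_{z,d} takes values in [y_L, y_U] almost surely for fixed reals y_L ≤ y_U. Fix d, d' ∈ {1,…,K} with d ≠ d', P(D=d | Z=1) > 0 and P(D=d | Z=0) > 0. Then: (a) if P(T=(d',d)) > 0 and γ̲^{1,r}_{(d',d)} > 0, then E[F^{-1}_{Y|D=d,Z=1}(U) | U ≤ γ̲^{1,r}_{(d',d)}] − y_U ≤ LCDE(d | (d',d)) ≤ E[F^{-1}_{Y|D=d,Z=1}(U) | U ≥ 1 − γ̲^{1,r}_{(d',d)}] − y_L; and (b) if P(T=(d,d')) > 0 and γ̲^{0,r}_{(d,d')} > 0, then y_L − E[F^{-1}_{Y|D=d,Z=0}(U) | U ≥ 1 − γ̲^{0,r}_{(d,d')}] ≤ LCDE(d | (d,d')) ≤ y_U − E[F^{-1}_{Y|D=d,Z=0}(U) | U ≤ γ̲^{0,r}_{(d,d')}]. -/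

import Mathlib

/-!
Under RCT, conditioning on `Z = z` leaves the joint law of `Y_{z,d}` and `D_z` unchanged, so
`P(D = d | Z = z) = P(D_z = d)` and `F_{Y|D=d,Z=z}` is the cdf of the law `μ` of `Y_{z,d}` on
`{D_z = d}`. The switchers `{T = t}` lie in `{D_z = d}` (`z = 1` for `t = (d', d)`, `z = 0` for
`t = (d, d')`) with relative mass `P(T = t) / P(D_z = d) ≥ γ`, because `p̲ ≤ P(T = t)`; hence the
law `ν` of `Y_{z,d}` on `{T = t}` satisfies `γ ν ≤ μ`. Realising `μ` as the image of the uniform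
law on `(0, 1)` under its quantile function `q`, such a `ν` has mean between the averages of `q`
over `(0, γ)` and `(1 - γ, 1)`: for a value `m` separating `q` on `(0, γ)` from `q` on `(γ, 1)`,
`γ (m - E ν) = ∫ (m - x) d(γ ν) ≤ ∫ (m - x)⁺ dμ = ∫_0^γ (m - q)`, and symmetrically at `1 - γ`.
The other potential outcome in the LCDE contributes a term in `[y_L, y_U]`.
-/

open MeasureTheory ProbabilityTheory

/-- Realized layer `D = D_1·Z + D_0·(1−Z)` (for `Z` valued in `{0,1}`). -/
def Dreal {Ω : Type*} (Z D0 D1 : Ω → ℕ) (ω : Ω) : ℕ :=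
  D1 ω * Z ω + D0 ω * (1 - Z ω)

/-- Realized outcome `Y = Σ_{d=1}^K [Y_{1,d}·Z + Y_{0,d}·(1−Z)]·1{D=d}`. -/
noncomputable def Yreal {Ω : Type*} (K : ℕ) (Z D0 D1 : Ω → ℕ) (Y : ℕ → ℕ → Ω → ℝ)
    (ω : Ω) : ℝ :=
  ∑ d ∈ Finset.Icc 1 K,
    (Y 1 d ω * (Z ω : ℝ) + Y 0 d ω * (1 - (Z ω : ℝ))) *
      (if Dreal Z D0 D1 ω = d then 1 else 0)

/-- Assumption RCT: the σ-algebra generated by the potential outcomes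
`Y_{z,d}` (for `z ∈ {0,1}`, `d ∈ {1,…,K}`) together with `D_0, D_1` is
independent of (the σ-algebra generated by) `Z`. -/
def RCT {Ω : Type*} [MeasurableSpace Ω] (P : MeasureTheory.Measure Ω) (K : ℕ)
    (Y : ℕ → ℕ → Ω → ℝ) (D0 D1 Z : Ω → ℕ) : Prop :=
  ProbabilityTheory.Indep
    ((⨆ z ∈ ({0, 1} : Set ℕ), ⨆ d ∈ Set.Icc 1 K, MeasurableSpace.comap (Y z d) inferInstance)
      ⊔ MeasurableSpace.comap D0 inferInstance ⊔ MeasurableSpace.comap D1 inferInstance)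
    (MeasurableSpace.comap Z inferInstance) P

/-- CDF of a random variable `W` under a measure `μ`. -/
noncomputable def cdfOf {Ω : Type*} [MeasurableSpace Ω] (μ : MeasureTheory.Measure Ω)
    (W : Ω → ℝ) (w : ℝ) : ℝ :=
  (μ {ω | W ω ≤ w}).toReal

/-- Quantile function `F⁻¹(u) = inf {w : F(w) ≥ u}`. -/
noncomputable def quantileFn (F : ℝ → ℝ) (u : ℝ) : ℝ := sInf {w | u ≤ F w}

/-- Lower truncated mean `E[F⁻¹(U) | U ≤ γ]` for `U` uniform on `[0,1]`,
written as `γ⁻¹ ∫_{(0,γ]} F⁻¹(u) du`. -/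
noncomputable def lowerTrunc (F : ℝ → ℝ) (γ : ℝ) : ℝ :=
  γ⁻¹ * ∫ u in Set.Ioc (0 : ℝ) γ, quantileFn F u

/-- Upper truncated mean `E[F⁻¹(U) | U ≥ 1 − γ]` for `U` uniform on `[0,1]`,
written as `γ⁻¹ ∫_{[1−γ,1]} F⁻¹(u) du`. -/
noncomputable def upperTrunc (F : ℝ → ℝ) (γ : ℝ) : ℝ :=
  γ⁻¹ * ∫ u in Set.Ico (1 - γ) (1 : ℝ), quantileFn F u

/-- Propensity score `P(D = d | Z = z)` as a real number. -/
noncomputable def propScore {Ω : Type*} [MeasurableSpace Ω] (P : MeasureTheory.Measure Ω)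
    (Z D0 D1 : Ω → ℕ) (d z : ℕ) : ℝ :=
  ((P[|{ω | Z ω = z}]) {ω | Dreal Z D0 D1 ω = d}).toReal

/-- Identified set `Θ_I(R)` of response-type probability vectors: nonnegative
vectors on `{0,…,K}²` summing to one, matching both propensity-score margins,
and satisfying the restrictions `R`. -/
def ThetaI {Ω : Type*} [MeasurableSpace Ω] (P : MeasureTheory.Measure Ω) (K : ℕ)
    (Z D0 D1 : Ω → ℕ) (R : (ℕ × ℕ → ℝ) → Prop) : Set (ℕ × ℕ → ℝ) :=
  {p | (∀ t ∈ Finset.range (K + 1) ×ˢ Finset.range (K + 1), 0 ≤ p t) ∧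
       (∑ t ∈ Finset.range (K + 1) ×ˢ Finset.range (K + 1), p t = 1) ∧
       (∀ d ≤ K, propScore P Z D0 D1 d 1 = ∑ d' ∈ Finset.range (K + 1), p (d', d)) ∧
       (∀ d ≤ K, propScore P Z D0 D1 d 0 = ∑ d' ∈ Finset.range (K + 1), p (d, d')) ∧
       R p}

/-- `p̲^r_t`: the infimum of `p t` over the identified set `Θ_I(R)`. -/
noncomputable def pbar {Ω : Type*} [MeasurableSpace Ω] (P : MeasureTheory.Measure Ω)
    (K : ℕ) (Z D0 D1 : Ω → ℕ) (R : (ℕ × ℕ → ℝ) → Prop) (t : ℕ × ℕ) : ℝ :=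
  sInf ((fun p => p t) '' ThetaI P K Z D0 D1 R)

/-- The conditional CDF `F_{Y|D=d,Z=z}` of the realized outcome. -/
noncomputable def FYcond {Ω : Type*} [MeasurableSpace Ω] (P : MeasureTheory.Measure Ω)
    (K : ℕ) (Z D0 D1 : Ω → ℕ) (Y : ℕ → ℕ → Ω → ℝ) (d z : ℕ) : ℝ → ℝ :=
  cdfOf (P[|{ω | Dreal Z D0 D1 ω = d ∧ Z ω = z}]) (Yreal K Z D0 D1 Y)


open Set Filter

section Quantile

lemma exists_le_cdf (μ : Measure ℝ) {u : ℝ} (hu : u < 1) : ∃ w, u ≤ cdf μ w :=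
  ((tendsto_cdf_atTop μ).eventually (lt_mem_nhds hu)).exists.imp fun _ => le_of_lt

variable {μ : Measure ℝ}

lemma quantileFn_cdf_le_iff {u : ℝ} (hu : 0 < u) (hne : ∃ w, u ≤ cdf μ w) (t : ℝ) :
    quantileFn (cdf μ) u ≤ t ↔ u ≤ cdf μ t := by
  have hbdd : BddBelow {w | u ≤ cdf μ w} := by
    obtain ⟨w₀, hw₀⟩ := eventually_atBot.1 ((tendsto_cdf_atBot μ).eventually (gt_mem_nhds hu))
    exact ⟨w₀, fun w hw => le_of_not_gt fun hlt => (lt_of_le_of_lt hw (hw₀ w hlt.le)).false⟩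
  refine ⟨fun hq => ?_, fun h => csInf_le hbdd h⟩
  have hright : ∀ t' ∈ Ioi t, u ≤ cdf μ t' := fun t' ht' => by
    obtain ⟨w, hw, hwt⟩ := exists_lt_of_csInf_lt hne (hq.trans_lt ht')
    exact le_trans hw (monotone_cdf μ hwt.le)
  exact ge_of_tendsto (((cdf μ).right_continuous t).mono Ioi_subset_Ici_self)
    (eventually_nhdsWithin_of_forall hright)

lemma monotoneOn_quantileFn_cdf : MonotoneOn (quantileFn (cdf μ)) (Ioo 0 1) :=
  fun _ hu _ hv huv => (quantileFn_cdf_le_iff hu.1 (exists_le_cdf μ hu.2) _).2 <|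
    huv.trans ((quantileFn_cdf_le_iff hv.1 (exists_le_cdf μ hv.2) _).1 le_rfl)

variable [IsProbabilityMeasure μ]

lemma map_quantileFn_cdf : (volume.restrict (Ioo 0 1)).map (quantileFn (cdf μ)) = μ := by
  have hq : AEMeasurable (quantileFn (cdf μ)) (volume.restrict (Ioo 0 1)) :=
    aemeasurable_restrict_of_monotoneOn measurableSet_Ioo monotoneOn_quantileFn_cdf
  refine Measure.ext_of_Iic _ _ fun t => ?_
  have hpre : quantileFn (cdf μ) ⁻¹' Iic t ∩ Ioo 0 1 = Ioo 0 1 ∩ Iic (cdf μ t) := by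
    ext u
    simp only [mem_inter_iff, mem_preimage, mem_Iic]
    exact ⟨fun ⟨h, hu⟩ => ⟨hu, (quantileFn_cdf_le_iff hu.1 (exists_le_cdf μ hu.2) t).1 h⟩,
      fun ⟨hu, h⟩ => ⟨(quantileFn_cdf_le_iff hu.1 (exists_le_cdf μ hu.2) t).2 h, hu⟩⟩
  rw [Measure.map_apply_of_aemeasurable hq measurableSet_Iic,
    Measure.restrict_apply' measurableSet_Ioo, hpre,
    measure_congr ((ae_eq_refl (Ioo (0 : ℝ) 1)).inter Iio_ae_eq_Iic.symm), Ioo_inter_Iio,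
    Real.volume_Ioo, min_eq_right (cdf_le_one μ t), sub_zero, ofReal_cdf]

variable {a b : ℝ}

lemma cdf_eq_zero_of_lt (hμ : ∀ᵐ x ∂μ, x ∈ Icc a b) {t : ℝ} (ht : t < a) : cdf μ t = 0 := by
  rw [cdf_eq_real, measureReal_eq_zero_iff]
  exact measure_mono_null (show Iic t ⊆ {x | x ∉ Icc a b} from
    fun x hx hxab => (hxab.1.trans hx).not_gt ht) (ae_iff.1 hμ)

lemma cdf_eq_one_of_le (hμ : ∀ᵐ x ∂μ, x ∈ Icc a b) {t : ℝ} (ht : b ≤ t) : cdf μ t = 1 := by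
  have hnull : μ (Iic t)ᶜ = 0 :=
    measure_mono_null (show (Iic t)ᶜ ⊆ {x | x ∉ Icc a b} from
      fun x hx hxab => hx (hxab.2.trans ht)) (ae_iff.1 hμ)
  rw [cdf_eq_real, measureReal_def,
    (prob_compl_eq_zero_iff₀ measurableSet_Iic.nullMeasurableSet).1 hnull, ENNReal.toReal_one]

lemma quantileFn_cdf_mem_Icc (hμ : ∀ᵐ x ∂μ, x ∈ Icc a b) {u : ℝ} (hu : u ∈ Ioc 0 1) :
    quantileFn (cdf μ) u ∈ Icc a b := by
  have hub : u ≤ cdf μ b := hu.2.trans (cdf_eq_one_of_le hμ le_rfl).ge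
  refine ⟨le_of_not_gt fun hlt => ?_, (quantileFn_cdf_le_iff hu.1 ⟨b, hub⟩ b).2 hub⟩
  have := (quantileFn_cdf_le_iff hu.1 ⟨b, hub⟩ _).1 le_rfl
  rw [cdf_eq_zero_of_lt hμ hlt] at this
  exact hu.1.not_ge this

end Quantile

section TrimmedMean

lemma MonotoneOn.integrableOn_of_mapsTo_Icc {q : ℝ → ℝ} {s : Set ℝ} {a b : ℝ}
    (hq : MonotoneOn q s) (hqab : MapsTo q s (Icc a b)) (hs : MeasurableSet s)
    (hs' : volume s < ⊤) : IntegrableOn q s :=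
  IntegrableOn.of_bound hs' (aemeasurable_restrict_of_monotoneOn hs hq).aestronglyMeasurable
    (max |a| |b|) <| (ae_restrict_iff' hs).2 <| ae_of_all _ fun _ hu =>
      abs_le_max_abs_abs (hqab hu).1 (hqab hu).2

lemma integral_le_integral_max_zero_of_le {α : Type*} [MeasurableSpace α] {μ ρ : Measure α}
    (hρμ : ρ ≤ μ) {f : α → ℝ} (hf : Integrable f μ) :
    ∫ x, f x ∂ρ ≤ ∫ x, max (f x) 0 ∂μ :=
  (integral_mono (hf.mono_measure hρμ) (hf.pos_part.mono_measure hρμ)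
    fun _ => le_max_left _ _).trans
    (integral_mono_measure hρμ (ae_of_all _ fun _ => le_max_right _ _) hf.pos_part)

lemma setIntegral_max_zero_eq {α : Type*} [MeasurableSpace α] {μ : Measure α} {s t : Set α}
    (hs : MeasurableSet s) (ht : MeasurableSet t) (hst : s ⊆ t) {g : α → ℝ}
    (hpos : ∀ x ∈ s, 0 ≤ g x) (hneg : ∀ x ∈ t \ s, g x ≤ 0) :
    ∫ x in t, max (g x) 0 ∂μ = ∫ x in s, g x ∂μ := by
  rw [setIntegral_congr_fun ht (g := s.indicator g) fun x hx => ?_, setIntegral_indicator hs,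
    inter_eq_right.2 hst]
  by_cases hxs : x ∈ s
  · rw [indicator_of_mem hxs, max_eq_left (hpos x hxs)]
  · rw [indicator_of_notMem hxs, max_eq_right (hneg x ⟨hx, hxs⟩)]

lemma integrable_id_map_of_mapsTo {q : ℝ → ℝ} {a b : ℝ} (hq : MonotoneOn q (Ioo 0 1))
    (hqab : MapsTo q (Ioo 0 1) (Icc a b)) :
    Integrable id ((volume.restrict (Ioo 0 1)).map q) := by
  have hqae := aemeasurable_restrict_of_monotoneOn (μ := volume) measurableSet_Ioo hq
  exact Integrable.of_mem_Icc a b aemeasurable_id <|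
    (ae_map_iff hqae measurableSet_Icc).2 (ae_restrict_of_forall_mem measurableSet_Ioo hqab)

lemma setIntegral_Ioo_zero_le_of_smul_le_map {q : ℝ → ℝ} {a b : ℝ}
    (hq : MonotoneOn q (Ioo 0 1)) (hqab : MapsTo q (Ioo 0 1) (Icc a b))
    {ν : Measure ℝ} [IsProbabilityMeasure ν] {γ : ℝ} (hγ : 0 < γ) (hγ1 : γ ≤ 1)
    (hle : ENNReal.ofReal γ • ν ≤ (volume.restrict (Ioo 0 1)).map q) :
    ∫ u in Ioo 0 γ, q u ≤ γ * ∫ x, x ∂ν := by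
  have hqae := aemeasurable_restrict_of_monotoneOn (μ := volume) measurableSet_Ioo hq
  have hμ := integrable_id_map_of_mapsTo hq hqab
  have hν : Integrable (fun x => x) ν := (integrable_smul_measure (ENNReal.ofReal_pos.2 hγ).ne'
    ENNReal.ofReal_ne_top).1 (hμ.mono_measure hle)
  have hS : Ioo 0 γ ⊆ Ioo (0 : ℝ) 1 := Ioo_subset_Ioo_right hγ1
  -- `q` is only controlled on `(0, 1)`, so the cut is a supremum rather than `q γ`.
  set m := sSup (q '' Ioo 0 γ)
  have hbdd : BddAbove (q '' Ioo 0 γ) := ⟨b, forall_mem_image.2 fun u hu => (hqab (hS hu)).2⟩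
  have hpos : ∀ u ∈ Ioo 0 γ, 0 ≤ m - q u := fun u hu =>
    sub_nonneg.2 (le_csSup hbdd (mem_image_of_mem q hu))
  have hneg : ∀ u ∈ Ioo 0 1 \ Ioo 0 γ, m - q u ≤ 0 := fun u ⟨hu, hnu⟩ => by
    have hγu : γ ≤ u := le_of_not_gt fun h => hnu ⟨hu.1, h⟩
    exact sub_nonpos.2 <| csSup_le ((nonempty_Ioo.2 hγ).image q) <|
      forall_mem_image.2 fun v hv => hq (hS hv) hu (hv.2.le.trans hγu)
  have hqint : IntegrableOn q (Ioo 0 γ) :=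
    (hq.mono hS).integrableOn_of_mapsTo_Icc (hqab.mono_left hS) measurableSet_Ioo measure_Ioo_lt_top
  have key : γ * m - γ * ∫ x, x ∂ν ≤ γ * m - ∫ u in Ioo 0 γ, q u :=
    calc γ * m - γ * ∫ x, x ∂ν = ∫ x, (m - x) ∂(ENNReal.ofReal γ • ν) := by
          rw [integral_smul_measure, integral_sub (integrable_const m) hν]
          simp [ENNReal.toReal_ofReal hγ.le, mul_sub]
      _ ≤ ∫ x, max (m - x) 0 ∂(volume.restrict (Ioo 0 1)).map q :=
          integral_le_integral_max_zero_of_le hle ((integrable_const m).sub hμ)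
      _ = ∫ u in Ioo 0 1, max (m - q u) 0 :=
          integral_map hqae
            (by fun_prop : Continuous fun x : ℝ => max (m - x) 0).aestronglyMeasurable
      _ = ∫ u in Ioo 0 γ, (m - q u) :=
          setIntegral_max_zero_eq measurableSet_Ioo measurableSet_Ioo hS hpos hneg
      _ = γ * m - ∫ u in Ioo 0 γ, q u := by
          rw [integral_sub (integrable_const m) hqint, setIntegral_const,
            Real.volume_real_Ioo_of_le hγ.le, sub_zero, smul_eq_mul]
  linarith

lemma le_setIntegral_Ioo_one_of_smul_le_map {q : ℝ → ℝ} {a b : ℝ}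
    (hq : MonotoneOn q (Ioo 0 1)) (hqab : MapsTo q (Ioo 0 1) (Icc a b))
    {ν : Measure ℝ} [IsProbabilityMeasure ν] {γ : ℝ} (hγ : 0 < γ) (hγ1 : γ ≤ 1)
    (hle : ENNReal.ofReal γ • ν ≤ (volume.restrict (Ioo 0 1)).map q) :
    γ * ∫ x, x ∂ν ≤ ∫ u in Ioo (1 - γ) 1, q u := by
  have hqae := aemeasurable_restrict_of_monotoneOn (μ := volume) measurableSet_Ioo hq
  have hμ := integrable_id_map_of_mapsTo hq hqab
  have hν : Integrable (fun x => x) ν := (integrable_smul_measure (ENNReal.ofReal_pos.2 hγ).ne'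
    ENNReal.ofReal_ne_top).1 (hμ.mono_measure hle)
  have hS : Ioo (1 - γ) 1 ⊆ Ioo (0 : ℝ) 1 := Ioo_subset_Ioo_left (by linarith)
  set m := sInf (q '' Ioo (1 - γ) 1)
  have hbdd : BddBelow (q '' Ioo (1 - γ) 1) :=
    ⟨a, forall_mem_image.2 fun u hu => (hqab (hS hu)).1⟩
  have hpos : ∀ u ∈ Ioo (1 - γ) 1, 0 ≤ q u - m := fun u hu =>
    sub_nonneg.2 (csInf_le hbdd (mem_image_of_mem q hu))
  have hneg : ∀ u ∈ Ioo 0 1 \ Ioo (1 - γ) 1, q u - m ≤ 0 := fun u ⟨hu, hnu⟩ => by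
    have huγ : u ≤ 1 - γ := le_of_not_gt fun h => hnu ⟨h, hu.2⟩
    exact sub_nonpos.2 <| le_csInf ((nonempty_Ioo.2 (by linarith)).image q) <|
      forall_mem_image.2 fun v hv => hq hu (hS hv) (huγ.trans hv.1.le)
  have hqint : IntegrableOn q (Ioo (1 - γ) 1) :=
    (hq.mono hS).integrableOn_of_mapsTo_Icc (hqab.mono_left hS) measurableSet_Ioo measure_Ioo_lt_top
  have key : γ * ∫ x, x ∂ν - γ * m ≤ (∫ u in Ioo (1 - γ) 1, q u) - γ * m :=
    calc γ * ∫ x, x ∂ν - γ * m = ∫ x, (x - m) ∂(ENNReal.ofReal γ • ν) := by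
          rw [integral_smul_measure, integral_sub hν (integrable_const m)]
          simp [ENNReal.toReal_ofReal hγ.le, mul_sub]
      _ ≤ ∫ x, max (x - m) 0 ∂(volume.restrict (Ioo 0 1)).map q :=
          integral_le_integral_max_zero_of_le hle (hμ.sub (integrable_const m))
      _ = ∫ u in Ioo 0 1, max (q u - m) 0 :=
          integral_map hqae
            (by fun_prop : Continuous fun x : ℝ => max (x - m) 0).aestronglyMeasurable
      _ = ∫ u in Ioo (1 - γ) 1, (q u - m) :=
          setIntegral_max_zero_eq measurableSet_Ioo measurableSet_Ioo hS hpos hneg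
      _ = (∫ u in Ioo (1 - γ) 1, q u) - γ * m := by
          rw [integral_sub hqint (integrable_const m), setIntegral_const,
            Real.volume_real_Ioo_of_le (by linarith), sub_sub_cancel, smul_eq_mul]
  linarith

theorem integral_mem_Icc_lowerTrunc_upperTrunc {μ ν : Measure ℝ} [IsProbabilityMeasure μ]
    [IsProbabilityMeasure ν] {a b : ℝ} (hμ : ∀ᵐ x ∂μ, x ∈ Icc a b) {γ : ℝ} (hγ : 0 < γ)
    (hle : ENNReal.ofReal γ • ν ≤ μ) :
    ∫ x, x ∂ν ∈ Icc (lowerTrunc (cdf μ) γ) (upperTrunc (cdf μ) γ) := by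
  have hγ1 : γ ≤ 1 := by simpa using hle univ
  have hq := monotoneOn_quantileFn_cdf (μ := μ)
  have hqab : MapsTo (quantileFn (cdf μ)) (Ioo 0 1) (Icc a b) := fun _ hu =>
    quantileFn_cdf_mem_Icc hμ (Ioo_subset_Ioc_self hu)
  rw [← map_quantileFn_cdf (μ := μ)] at hle
  constructor
  · rw [lowerTrunc, integral_Ioc_eq_integral_Ioo, inv_mul_le_iff₀ hγ]
    exact setIntegral_Ioo_zero_le_of_smul_le_map hq hqab hγ hγ1 hle
  · rw [upperTrunc, integral_Ico_eq_integral_Ioo, le_inv_mul_iff₀ hγ]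
    exact le_setIntegral_Ioo_one_of_smul_le_map hq hqab hγ hγ1 hle

end TrimmedMean

section Conditioning

variable {Ω : Type*} [mΩ : MeasurableSpace Ω] {P : Measure Ω} [IsFiniteMeasure P]

lemma smul_cond_le_cond_of_subset {A T : Set Ω} (hA : MeasurableSet A) (hT : MeasurableSet T)
    (hTA : T ⊆ A) (hT0 : P T ≠ 0) : (P T / P A) • P[|T] ≤ P[|A] := by
  intro s
  rw [Measure.smul_apply, smul_eq_mul, cond_apply hT, cond_apply hA]
  calc P T / P A * ((P T)⁻¹ * P (T ∩ s)) = (P T * (P T)⁻¹) * ((P A)⁻¹ * P (T ∩ s)) := by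
        rw [div_eq_mul_inv]; ring
    _ = (P A)⁻¹ * P (T ∩ s) := by rw [ENNReal.mul_inv_cancel hT0 (measure_ne_top P T), one_mul]
    _ ≤ (P A)⁻¹ * P (A ∩ s) := by gcongr

lemma cond_inter_apply_of_indep {m₁ m₂ : MeasurableSpace Ω} (hind : Indep m₁ m₂ P)
    (hm₁ : m₁ ≤ mΩ) (hm₂ : m₂ ≤ mΩ) {A C E : Set Ω} (hA : MeasurableSet[m₁] A)
    (hE : MeasurableSet[m₁] E) (hC : MeasurableSet[m₂] C) (hC0 : P C ≠ 0) :
    P[E | A ∩ C] = P[E | A] := by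
  have hAC : P (A ∩ C) = P A * P C := (Indep_iff _ _ _).1 hind _ _ hA hC
  have hACE : P (A ∩ C ∩ E) = P (A ∩ E) * P C := by
    rw [inter_right_comm]; exact (Indep_iff _ _ _).1 hind _ _ (hA.inter hE) hC
  rw [cond_apply ((hm₁ _ hA).inter (hm₂ _ hC)), cond_apply (hm₁ _ hA), hAC, hACE,
    ENNReal.mul_inv (Or.inr (measure_ne_top P C)) (Or.inl (measure_ne_top P A))]
  calc (P A)⁻¹ * (P C)⁻¹ * (P (A ∩ E) * P C)
      = (P A)⁻¹ * P (A ∩ E) * ((P C)⁻¹ * P C) := by ring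
    _ = (P A)⁻¹ * P (A ∩ E) := by rw [ENNReal.inv_mul_cancel hC0 (measure_ne_top P C), mul_one]

theorem integral_cond_mem_Icc_lowerTrunc_upperTrunc {V : Ω → ℝ} (hV : Measurable V)
    {A T : Set Ω} (hA : MeasurableSet A) (hT : MeasurableSet T) (hTA : T ⊆ A) (hT0 : P T ≠ 0)
    {a b : ℝ} (hVab : ∀ᵐ ω ∂P, V ω ∈ Icc a b) {γ : ℝ} (hγ : 0 < γ)
    (hγle : γ ≤ (P T).toReal / (P A).toReal) :
    ∫ ω, V ω ∂P[|T] ∈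
      Icc (lowerTrunc (cdf (P[|A].map V)) γ) (upperTrunc (cdf (P[|A].map V)) γ) := by
  have hA0 : P A ≠ 0 := fun h => hT0 (measure_mono_null hTA h)
  have := cond_isProbabilityMeasure hA0
  have := cond_isProbabilityMeasure hT0
  have := Measure.isProbabilityMeasure_map (μ := P[|A]) hV.aemeasurable
  have := Measure.isProbabilityMeasure_map (μ := P[|T]) hV.aemeasurable
  have hγ' : ENNReal.ofReal γ ≤ P T / P A := by
    rwa [ENNReal.ofReal_le_iff_le_toReal (ENNReal.div_ne_top (measure_ne_top P T) hA0),
      ENNReal.toReal_div]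
  have hle : ENNReal.ofReal γ • P[|T].map V ≤ P[|A].map V :=
    calc ENNReal.ofReal γ • P[|T].map V ≤ (P T / P A) • P[|T].map V := by gcongr
      _ = ((P T / P A) • P[|T]).map V := (Measure.map_smul _ _ _).symm
      _ ≤ P[|A].map V := Measure.map_mono (smul_cond_le_cond_of_subset hA hT hTA hT0) hV
  rw [← integral_map (f := fun x => x) hV.aemeasurable aestronglyMeasurable_id]
  exact integral_mem_Icc_lowerTrunc_upperTrunc ((ae_map_iff hV.aemeasurable measurableSet_Icc).2
    (cond_absolutelyContinuous.ae_le hVab)) hγ hle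

lemma integral_cond_mem_Icc_of_ae_mem {f : Ω → ℝ} (hf : AEMeasurable f P) {a b : ℝ}
    (hab : ∀ᵐ ω ∂P, f ω ∈ Icc a b) {T : Set Ω} (hT0 : P T ≠ 0) :
    ∫ ω, f ω ∂P[|T] ∈ Icc a b := by
  have := cond_isProbabilityMeasure hT0
  have hab' : ∀ᵐ ω ∂P[|T], f ω ∈ Icc a b := cond_absolutelyContinuous.ae_le hab
  have hfi := Integrable.of_mem_Icc a b (hf.mono_ac cond_absolutelyContinuous) hab'
  constructor
  · simpa using integral_mono_ae (integrable_const a) hfi (hab'.mono fun _ h => h.1)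
  · simpa using integral_mono_ae hfi (integrable_const b) (hab'.mono fun _ h => h.2)

end Conditioning

section Model

variable {Ω : Type*} {K : ℕ} {Z D0 D1 : Ω → ℕ} {Y : ℕ → ℕ → Ω → ℝ}

abbrev potentialSigma (K : ℕ) (Y : ℕ → ℕ → Ω → ℝ) (D0 D1 : Ω → ℕ) : MeasurableSpace Ω :=
  (⨆ z ∈ ({0, 1} : Set ℕ), ⨆ d ∈ Set.Icc 1 K, MeasurableSpace.comap (Y z d) inferInstance)
    ⊔ MeasurableSpace.comap D0 inferInstance ⊔ MeasurableSpace.comap D1 inferInstance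

lemma measurable_potentialSigma_Y {z d : ℕ} (hz : z ≤ 1) (hd1 : 1 ≤ d) (hdK : d ≤ K) :
    Measurable[potentialSigma K Y D0 D1] (Y z d) :=
  Measurable.of_comap_le <| (le_sup_left.trans le_sup_left).trans' <|
    le_iSup₂_of_le z (show z ∈ ({0, 1} : Set ℕ) by interval_cases z <;> simp) <|
      le_iSup₂_of_le d (show d ∈ Set.Icc 1 K from ⟨hd1, hdK⟩) le_rfl

lemma measurable_potentialSigma_D0 : Measurable[potentialSigma K Y D0 D1] D0 :=
  Measurable.of_comap_le <| le_sup_right.trans le_sup_left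

lemma measurable_potentialSigma_D1 : Measurable[potentialSigma K Y D0 D1] D1 :=
  Measurable.of_comap_le le_sup_right

lemma potentialSigma_le [mΩ : MeasurableSpace Ω]
    (hYm : ∀ z ≤ 1, ∀ d, 1 ≤ d → d ≤ K → Measurable (Y z d))
    (hD0m : Measurable D0) (hD1m : Measurable D1) : potentialSigma K Y D0 D1 ≤ mΩ :=
  sup_le (sup_le (iSup₂_le fun z hz => iSup₂_le fun d hd =>
    (hYm z (by rcases hz with rfl | rfl <;> simp) d hd.1 hd.2).comap_le) hD0m.comap_le)
    hD1m.comap_le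

lemma Yreal_eq_of_Dreal_eq {z d : ℕ} (hz : z ≤ 1) (hd1 : 1 ≤ d) (hdK : d ≤ K) {ω : Ω} (hZ : Z ω = z)
    (hD : Dreal Z D0 D1 ω = d) : Yreal K Z D0 D1 Y ω = Y z d ω := by
  rw [Yreal, Finset.sum_eq_single_of_mem d (Finset.mem_Icc.2 ⟨hd1, hdK⟩) fun e _ hne => by
    rw [if_neg (hD.trans_ne hne.symm), mul_zero], if_pos hD, hZ]
  interval_cases z <;> simp

lemma cdfOf_congr_ae [MeasurableSpace Ω] {μ : Measure Ω} {W W' : Ω → ℝ} (h : W =ᵐ[μ] W') :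
    cdfOf μ W = cdfOf μ W' :=
  funext fun w => by
    rw [cdfOf, cdfOf, measure_congr (h.mono fun ω hω => show (W ω ≤ w) = (W' ω ≤ w) by rw [hω] :
      {ω | W ω ≤ w} =ᵐ[μ] {ω | W' ω ≤ w})]

lemma cdfOf_eq_cdf_map [MeasurableSpace Ω] {μ : Measure Ω} [IsProbabilityMeasure μ] {W : Ω → ℝ}
    (hW : AEMeasurable W μ) : cdfOf μ W = cdf (μ.map W) := by
  have := Measure.isProbabilityMeasure_map hW
  funext w
  rw [cdfOf, cdf_eq_real, measureReal_def, Measure.map_apply_of_aemeasurable hW measurableSet_Iic]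
  rfl

lemma measure_setOf_eq_zero_ne_zero [MeasurableSpace Ω] {P : Measure Ω} [IsProbabilityMeasure P]
    (hZm : Measurable Z) (hZ01 : ∀ ω, Z ω ≤ 1) (hZlt : P {ω | Z ω = 1} < 1) :
    P {ω | Z ω = 0} ≠ 0 := by
  have hcompl : {ω | Z ω = 0} = {ω | Z ω = 1}ᶜ := by
    ext ω
    have := hZ01 ω
    simp only [mem_ofPred_eq, mem_compl_iff]
    omega
  have hZ1m : MeasurableSet {ω | Z ω = 1} := hZm (measurableSet_singleton 1)
  rw [hcompl, prob_compl_eq_one_sub hZ1m]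
  exact (tsub_pos_of_lt hZlt).ne'

end Model

section RCT

variable {Ω : Type*} [mΩ : MeasurableSpace Ω] {P : Measure Ω} [IsProbabilityMeasure P] {K : ℕ}
  {Z D0 D1 : Ω → ℕ} {Y : ℕ → ℕ → Ω → ℝ}

lemma propScore_eq_of_RCT (hRCT : RCT P K Y D0 D1 Z) (hσ : potentialSigma K Y D0 D1 ≤ mΩ)
    (hZm : Measurable Z) {z : ℕ} (hZ0 : P {ω | Z ω = z} ≠ 0) {Dz : Ω → ℕ}
    (hDz : Measurable[potentialSigma K Y D0 D1] Dz)
    (hDreal : ∀ ω, Z ω = z → Dreal Z D0 D1 ω = Dz ω) (d : ℕ) :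
    propScore P Z D0 D1 d z = (P {ω | Dz ω = d}).toReal := by
  have hC : MeasurableSet {ω | Z ω = z} := hZm (measurableSet_singleton z)
  have hE : {ω | Z ω = z} ∩ {ω | Dreal Z D0 D1 ω = d} = {ω | Z ω = z} ∩ {ω | Dz ω = d} := by
    ext ω
    simp only [mem_inter_iff, mem_ofPred_eq]
    exact and_congr_right fun h => by rw [hDreal ω h]
  have hind := cond_inter_apply_of_indep hRCT hσ hZm.comap_le MeasurableSet.univ
    (hDz (measurableSet_singleton d)) ⟨{z}, measurableSet_singleton z, rfl⟩ hZ0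
  rw [univ_inter, cond_univ] at hind
  rw [propScore, ← cond_inter_self hC, hE, cond_inter_self hC]
  exact congrArg ENNReal.toReal hind

lemma FYcond_eq_of_RCT (hRCT : RCT P K Y D0 D1 Z) (hσ : potentialSigma K Y D0 D1 ≤ mΩ)
    (hZm : Measurable Z) {z d : ℕ} (hz : z ≤ 1) (hd1 : 1 ≤ d) (hdK : d ≤ K)
    (hZ0 : P {ω | Z ω = z} ≠ 0) {Dz : Ω → ℕ} (hDz : Measurable[potentialSigma K Y D0 D1] Dz)
    (hDreal : ∀ ω, Z ω = z → Dreal Z D0 D1 ω = Dz ω) (hD0 : P {ω | Dz ω = d} ≠ 0) :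
    FYcond P K Z D0 D1 Y d z = cdf (P[|{ω | Dz ω = d}].map (Y z d)) := by
  have hA : MeasurableSet[potentialSigma K Y D0 D1] {ω | Dz ω = d} :=
    hDz (measurableSet_singleton d)
  have hC : MeasurableSet[MeasurableSpace.comap Z inferInstance] {ω | Z ω = z} :=
    ⟨{z}, measurableSet_singleton z, rfl⟩
  have hS : {ω | Dreal Z D0 D1 ω = d ∧ Z ω = z} = {ω | Dz ω = d} ∩ {ω | Z ω = z} := by
    ext ω
    simp only [mem_inter_iff, mem_ofPred_eq]
    exact ⟨fun ⟨h, hz⟩ => ⟨(hDreal ω hz).symm.trans h, hz⟩,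
      fun ⟨h, hz⟩ => ⟨(hDreal ω hz).trans h, hz⟩⟩
  have hS0 : P ({ω | Dz ω = d} ∩ {ω | Z ω = z}) ≠ 0 := by
    rw [(Indep_iff _ _ _).1 hRCT _ _ hA hC]
    exact mul_ne_zero hD0 hZ0
  have := cond_isProbabilityMeasure hS0
  have hYσ := measurable_potentialSigma_Y (Y := Y) (D0 := D0) (D1 := D1) hz hd1 hdK
  have hYm : Measurable (Y z d) := hYσ.mono hσ le_rfl
  have hmap :
      P[|{ω | Dz ω = d} ∩ {ω | Z ω = z}].map (Y z d) = P[|{ω | Dz ω = d}].map (Y z d) := by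
    ext B hB
    rw [Measure.map_apply hYm hB, Measure.map_apply hYm hB]
    exact cond_inter_apply_of_indep hRCT hσ hZm.comap_le hA (hYσ hB) hC hZ0
  rw [FYcond, hS, cdfOf_congr_ae (W' := Y z d), cdfOf_eq_cdf_map hYm.aemeasurable, hmap]
  filter_upwards [ae_cond_mem ((hσ _ hA).inter (hZm.comap_le _ hC))] with ω hω
  exact Yreal_eq_of_Dreal_eq hz hd1 hdK hω.2 ((hDreal ω hω.2).trans hω.1)

theorem integral_cond_mem_Icc_trunc_FYcond (hRCT : RCT P K Y D0 D1 Z)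
    (hσ : potentialSigma K Y D0 D1 ≤ mΩ) (hZm : Measurable Z) {z d : ℕ} (hz : z ≤ 1)
    (hd1 : 1 ≤ d) (hdK : d ≤ K) (hZ0 : P {ω | Z ω = z} ≠ 0) {Dz : Ω → ℕ}
    (hDz : Measurable[potentialSigma K Y D0 D1] Dz)
    (hDreal : ∀ ω, Z ω = z → Dreal Z D0 D1 ω = Dz ω) {T : Set Ω} (hT : MeasurableSet T)
    (hTD : T ⊆ {ω | Dz ω = d}) (hT0 : P T ≠ 0) {a b : ℝ} (hY : ∀ᵐ ω ∂P, Y z d ω ∈ Icc a b)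
    {γ : ℝ} (hγ : 0 < γ) (hγle : γ ≤ (P T).toReal / propScore P Z D0 D1 d z) :
    ∫ ω, Y z d ω ∂P[|T] ∈
      Icc (lowerTrunc (FYcond P K Z D0 D1 Y d z) γ) (upperTrunc (FYcond P K Z D0 D1 Y d z) γ) := by
  have hD0 : P {ω | Dz ω = d} ≠ 0 := fun h => hT0 (measure_mono_null hTD h)
  rw [propScore_eq_of_RCT hRCT hσ hZm hZ0 hDz hDreal] at hγle
  rw [FYcond_eq_of_RCT hRCT hσ hZm hz hd1 hdK hZ0 hDz hDreal hD0]
  exact integral_cond_mem_Icc_lowerTrunc_upperTrunc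
    ((measurable_potentialSigma_Y hz hd1 hdK).mono hσ le_rfl)
    ((hDz.mono hσ le_rfl) (measurableSet_singleton d)) hT hTD hT0 hY hγ hγle

end RCT

lemma integral_sub_mem_Icc_sub {Ω : Type*} [MeasurableSpace Ω] {μ : Measure Ω} {f g : Ω → ℝ}
    (hf : Integrable f μ) (hg : Integrable g μ) {a b c e : ℝ} (hfI : ∫ ω, f ω ∂μ ∈ Icc a b)
    (hgI : ∫ ω, g ω ∂μ ∈ Icc c e) : ∫ ω, (f ω - g ω) ∂μ ∈ Icc (a - e) (b - c) := by
  rw [integral_sub hf hg]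
  exact ⟨by linarith [hfI.1, hgI.2], by linarith [hfI.2, hgI.1]⟩

lemma pbar_le_of_mem_ThetaI {Ω : Type*} [MeasurableSpace Ω] {P : Measure Ω} {K : ℕ}
    {Z D0 D1 : Ω → ℕ} {R : (ℕ × ℕ → ℝ) → Prop} {p : ℕ × ℕ → ℝ} (hp : p ∈ ThetaI P K Z D0 D1 R)
    {i j : ℕ} (hi : i ≤ K) (hj : j ≤ K) : pbar P K Z D0 D1 R (i, j) ≤ p (i, j) :=
  csInf_le ⟨0, forall_mem_image.2 fun _ hp' => hp'.1 (i, j) <|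
    Finset.mem_product.2 ⟨Finset.mem_range.2 (by omega), Finset.mem_range.2 (by omega)⟩⟩
    (mem_image_of_mem _ hp)

theorem multilayered_bounds_switchers_general
    {Ω : Type*} [MeasurableSpace Ω] (P : Measure Ω) [IsProbabilityMeasure P]
    (K : ℕ)
    (Z D0 D1 : Ω → ℕ)
    (hZm : Measurable Z) (hD0m : Measurable D0) (hD1m : Measurable D1)
    (hZ01 : ∀ ω, Z ω ≤ 1)
    (hZpos : 0 < P {ω | Z ω = 1}) (hZlt : P {ω | Z ω = 1} < 1)
    (Y : ℕ → ℕ → Ω → ℝ)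
    (hYm : ∀ z ≤ 1, ∀ d, 1 ≤ d → d ≤ K → Measurable (Y z d))
    (hRCT : RCT P K Y D0 D1 Z)
    (R : (ℕ × ℕ → ℝ) → Prop)
    (hTrue : (fun t : ℕ × ℕ => (P {ω | D0 ω = t.1 ∧ D1 ω = t.2}).toReal)
        ∈ ThetaI P K Z D0 D1 R)
    (yL yU : ℝ)
    (hBdd : ∀ z ≤ 1, ∀ d, 1 ≤ d → d ≤ K → ∀ᵐ ω ∂P, Y z d ω ∈ Set.Icc yL yU)
    (d d' : ℕ) (hd1 : 1 ≤ d) (hdK : d ≤ K) (hd'K : d' ≤ K) :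
    ((0 < P {ω | D0 ω = d' ∧ D1 ω = d} →
        0 < pbar P K Z D0 D1 R (d', d) / propScore P Z D0 D1 d 1 →
      (lowerTrunc (FYcond P K Z D0 D1 Y d 1)
            (pbar P K Z D0 D1 R (d', d) / propScore P Z D0 D1 d 1) - yU
          ≤ ∫ ω, (Y 1 d ω - Y 0 d ω) ∂(P[|{ω | D0 ω = d' ∧ D1 ω = d}]))
        ∧ (∫ ω, (Y 1 d ω - Y 0 d ω) ∂(P[|{ω | D0 ω = d' ∧ D1 ω = d}])
          ≤ upperTrunc (FYcond P K Z D0 D1 Y d 1)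
              (pbar P K Z D0 D1 R (d', d) / propScore P Z D0 D1 d 1) - yL)))
    ∧ ((0 < P {ω | D0 ω = d ∧ D1 ω = d'} →
        0 < pbar P K Z D0 D1 R (d, d') / propScore P Z D0 D1 d 0 →
      (yL - upperTrunc (FYcond P K Z D0 D1 Y d 0)
            (pbar P K Z D0 D1 R (d, d') / propScore P Z D0 D1 d 0)
          ≤ ∫ ω, (Y 1 d ω - Y 0 d ω) ∂(P[|{ω | D0 ω = d ∧ D1 ω = d'}]))
        ∧ (∫ ω, (Y 1 d ω - Y 0 d ω) ∂(P[|{ω | D0 ω = d ∧ D1 ω = d'}])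
          ≤ yU - lowerTrunc (FYcond P K Z D0 D1 Y d 0)
              (pbar P K Z D0 D1 R (d, d') / propScore P Z D0 D1 d 0)))) := by
  have hσ := potentialSigma_le hYm hD0m hD1m
  have hType : ∀ i j, MeasurableSet {ω | D0 ω = i ∧ D1 ω = j} := fun i j =>
    (hD0m (measurableSet_singleton i)).inter (hD1m (measurableSet_singleton j))
  have hint : ∀ z ≤ 1, ∀ T : Set Ω, Integrable (Y z d) P[|T] := fun z hz _ =>
    .of_mem_Icc yL yU (hYm z hz d hd1 hdK).aemeasurable
      (cond_absolutelyContinuous.ae_le (hBdd z hz d hd1 hdK))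
  have hmem : ∀ z ≤ 1, ∀ T : Set Ω, P T ≠ 0 → ∫ ω, Y z d ω ∂P[|T] ∈ Icc yL yU :=
    fun z hz _ => integral_cond_mem_Icc_of_ae_mem (hYm z hz d hd1 hdK).aemeasurable
      (hBdd z hz d hd1 hdK)
  refine ⟨fun hT0 hγ => integral_sub_mem_Icc_sub (hint 1 le_rfl _) (hint 0 zero_le_one _) ?_
      (hmem 0 zero_le_one _ hT0.ne'),
    fun hT0 hγ => integral_sub_mem_Icc_sub (hint 1 le_rfl _) (hint 0 zero_le_one _)
      (hmem 1 le_rfl _ hT0.ne') ?_⟩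
  · exact integral_cond_mem_Icc_trunc_FYcond hRCT hσ hZm le_rfl hd1 hdK hZpos.ne'
      measurable_potentialSigma_D1 (fun ω h => by simp [Dreal, h]) (hType d' d) (fun _ h => h.2)
      hT0.ne' (hBdd 1 le_rfl d hd1 hdK) hγ
      (div_le_div_of_nonneg_right (pbar_le_of_mem_ThetaI hTrue hd'K hdK) ENNReal.toReal_nonneg)
  · exact integral_cond_mem_Icc_trunc_FYcond hRCT hσ hZm zero_le_one hd1 hdK
      (measure_setOf_eq_zero_ne_zero hZm hZ01 hZlt) measurable_potentialSigma_D0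
      (fun ω h => by simp [Dreal, h]) (hType d d') (fun _ h => h.1)
      hT0.ne' (hBdd 0 zero_le_one d hd1 hdK) hγ
      (div_le_div_of_nonneg_right (pbar_le_of_mem_ThetaI hTrue hdK hd'K) ENNReal.toReal_nonneg)

/-- validity of the multilayered bounds for switchers: under
Assumption RCT, if the true response-type probability vector lies in
`Θ_I(R)` and the potential outcomes are supported in `[y_L, y_U]`, then the
local controlled direct effects for switcher types are bounded as stated. -/
theorem multilayered_bounds_switchers
    {Ω : Type*} [MeasurableSpace Ω] (P : Measure Ω) [IsProbabilityMeasure P]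
    (K : ℕ) (hK : 1 ≤ K)
    (Z D0 D1 : Ω → ℕ)
    (hZm : Measurable Z) (hD0m : Measurable D0) (hD1m : Measurable D1)
    (hZ01 : ∀ ω, Z ω ≤ 1) (hD0K : ∀ ω, D0 ω ≤ K) (hD1K : ∀ ω, D1 ω ≤ K)
    (hZpos : 0 < P {ω | Z ω = 1}) (hZlt : P {ω | Z ω = 1} < 1)
    (Y : ℕ → ℕ → Ω → ℝ)
    (hYm : ∀ z ≤ 1, ∀ d, 1 ≤ d → d ≤ K → Measurable (Y z d))
    (hYint : ∀ z ≤ 1, ∀ d, 1 ≤ d → d ≤ K → Integrable (Y z d) P)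
    (hRCT : RCT P K Y D0 D1 Z)
    (R : (ℕ × ℕ → ℝ) → Prop)
    (hTrue : (fun t : ℕ × ℕ => (P {ω | D0 ω = t.1 ∧ D1 ω = t.2}).toReal)
        ∈ ThetaI P K Z D0 D1 R)
    (yL yU : ℝ) (hyLU : yL ≤ yU)
    (hBdd : ∀ z ≤ 1, ∀ d, 1 ≤ d → d ≤ K → ∀ᵐ ω ∂P, Y z d ω ∈ Set.Icc yL yU)
    (d d' : ℕ) (hd1 : 1 ≤ d) (hdK : d ≤ K) (hd'1 : 1 ≤ d') (hd'K : d' ≤ K)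
    (hdd' : d ≠ d')
    (hprop1 : 0 < propScore P Z D0 D1 d 1) (hprop0 : 0 < propScore P Z D0 D1 d 0) :
    ((0 < P {ω | D0 ω = d' ∧ D1 ω = d} →
        0 < pbar P K Z D0 D1 R (d', d) / propScore P Z D0 D1 d 1 →
      (lowerTrunc (FYcond P K Z D0 D1 Y d 1)
            (pbar P K Z D0 D1 R (d', d) / propScore P Z D0 D1 d 1) - yU
          ≤ ∫ ω, (Y 1 d ω - Y 0 d ω) ∂(P[|{ω | D0 ω = d' ∧ D1 ω = d}]))
        ∧ (∫ ω, (Y 1 d ω - Y 0 d ω) ∂(P[|{ω | D0 ω = d' ∧ D1 ω = d}])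
          ≤ upperTrunc (FYcond P K Z D0 D1 Y d 1)
              (pbar P K Z D0 D1 R (d', d) / propScore P Z D0 D1 d 1) - yL)))
    ∧ ((0 < P {ω | D0 ω = d ∧ D1 ω = d'} →
        0 < pbar P K Z D0 D1 R (d, d') / propScore P Z D0 D1 d 0 →
      (yL - upperTrunc (FYcond P K Z D0 D1 Y d 0)
            (pbar P K Z D0 D1 R (d, d') / propScore P Z D0 D1 d 0)
          ≤ ∫ ω, (Y 1 d ω - Y 0 d ω) ∂(P[|{ω | D0 ω = d ∧ D1 ω = d'}]))
        ∧ (∫ ω, (Y 1 d ω - Y 0 d ω) ∂(P[|{ω | D0 ω = d ∧ D1 ω = d'}])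
          ≤ yU - lowerTrunc (FYcond P K Z D0 D1 Y d 0)
              (pbar P K Z D0 D1 R (d, d') / propScore P Z D0 D1 d 0)))) :=
  multilayered_bounds_switchers_general P K Z D0 D1 hZm hD0m hD1m hZ01 hZpos hZlt Y hYm hRCT R hTrue
    yL yU hBdd d d' hd1 hdK hd'K
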